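/- arXiv:math/0302242 — 7 statements merged into one kernel-verified Lean document; each statement's English description precedes it below -/
import Mathlib

section
/- For nonnegative reals λ₁, …, λₙ with λᵢλⱼ ≤ 1-δ for all i ≠ j (where 0 < δ ≤ 1), and any real numbers h_{α,i,k} (indexed by α in a finite set, i,k in {1,…,n}), the quantity Σ_{α,i,k} h_{α,i,k}² + Σ_{k,i} λᵢ² h_{n+i,i,k}² + 2Σ_{k, i<j} λᵢλⱼ h_{n+j,i,k} h_{n+i,j,k} is at least δ·Σ_{α,i,k} h_{α,i,k}². -/
/-!
For `i < j` and `0 ≤ c = λᵢλⱼ ≤ 1 - δ`, `2cxy ≥ -c(x² + y²) ≥ -(1 - δ)(x² + y²)`. Summed over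
the pairs `i < j` and over `k`, the cross terms therefore cost at most `(1 - δ)` times the
off-diagonal part of `Σ h²`, which is at most `|A|²` because `h` is `A` truncated or padded
with zeros. The diagonal terms `λᵢ² h²` are nonnegative, so `δ|A|²` remains.
-/

open Finset

theorem sum_sum_lt_comm {M ι : Type*} [AddCommMonoid M] [Fintype ι] [LinearOrder ι]
    (g : ι → ι → M) :
    ∑ i, ∑ j ∈ univ.filter (fun j => i < j), g i j
      = ∑ j, ∑ i ∈ univ.filter (fun i => i < j), g i j :=
  sum_comm' (by simp)

section OrderedSums

variable {M : Type*} [AddCommMonoid M] [PartialOrder M] [IsOrderedAddMonoid M]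

theorem sum_dite_lt_le_sum {m : ℕ} (n : ℕ) (G : Fin m → M) (hG : ∀ α, 0 ≤ G α) :
    ∑ i : Fin n, (if hi : (i : ℕ) < m then G ⟨i, hi⟩ else 0) ≤ ∑ α, G α := by
  set G' : ℕ → M := fun k => if hk : k < m then G ⟨k, hk⟩ else 0
  have hG' : ∀ k, 0 ≤ G' k := fun k => by
    simp only [G']
    split_ifs
    exacts [hG _, le_rfl]
  calc ∑ i : Fin n, G' i = ∑ k ∈ range n, G' k := Fin.sum_univ_eq_sum_range G' n
    _ ≤ ∑ k ∈ range (max n m), G' k :=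
        sum_le_sum_of_subset_of_nonneg (by simp) fun k _ _ => hG' k
    _ = ∑ k ∈ range m, G' k := by
        refine (sum_subset (by simp) fun k _ hk => ?_).symm
        simp [G', not_lt.mp (mem_range.not.mp hk)]
    _ = ∑ α, G α := by simp [G', ← Fin.sum_univ_eq_sum_range]

variable {ι : Type*} [Fintype ι] [LinearOrder ι]

theorem sum_lt_add_sum_gt_le_sum (f : ι → M) (hf : ∀ j, 0 ≤ f j) (i : ι) :
    ∑ j ∈ univ.filter (fun j => j < i), f j + ∑ j ∈ univ.filter (fun j => i < j), f j
      ≤ ∑ j, f j := by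
  rw [← sum_filter_add_sum_filter_not univ (fun j => j < i) f]
  gcongr
  · exact fun j _ _ => hf j
  · exact lt_asymm

theorem sum_sum_lt_add_swap_le_sum_sum (f : ι → ι → M) (hf : ∀ i j, 0 ≤ f i j) :
    ∑ i, ∑ j ∈ univ.filter (fun j => i < j), (f j i + f i j) ≤ ∑ i, ∑ j, f i j := by
  calc ∑ i, ∑ j ∈ univ.filter (fun j => i < j), (f j i + f i j)
      = ∑ i, (∑ j ∈ univ.filter (fun j => j < i), f i j
          + ∑ j ∈ univ.filter (fun j => i < j), f i j) := by
        simp only [sum_add_distrib, sum_sum_lt_comm (fun i j => f j i)]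
    _ ≤ ∑ i, ∑ j, f i j := sum_le_sum fun i _ => sum_lt_add_sum_gt_le_sum _ (hf i) i

end OrderedSums

section CrossTerms

variable {R : Type*} [CommRing R] [LinearOrder R] [IsStrictOrderedRing R]

theorem neg_mul_sq_add_sq_le_two_mul {b c : R} (hc : 0 ≤ c) (hcb : c ≤ b) (x y : R) :
    -(b * (x ^ 2 + y ^ 2)) ≤ 2 * (c * x * y) := by
  nlinarith [mul_nonneg hc (sq_nonneg (x + y)),
    mul_nonneg (sub_nonneg.2 hcb) (add_nonneg (sq_nonneg x) (sq_nonneg y))]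

variable {ι : Type*} [Fintype ι] [LinearOrder ι]

theorem neg_mul_sum_sq_le_two_mul_sum_cross (l : ι → R) (hl : ∀ i, 0 ≤ l i) {b : R}
    (hb : 0 ≤ b) (hlb : ∀ i j, i ≠ j → l i * l j ≤ b) (x : ι → ι → R) :
    -(b * ∑ i, ∑ j, x i j ^ 2)
      ≤ 2 * ∑ i, ∑ j ∈ univ.filter (fun j => i < j), l i * l j * x j i * x i j := by
  calc -(b * ∑ i, ∑ j, x i j ^ 2)
      ≤ -(b * ∑ i, ∑ j ∈ univ.filter (fun j => i < j), (x j i ^ 2 + x i j ^ 2)) :=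
        neg_le_neg <| mul_le_mul_of_nonneg_left
          (sum_sum_lt_add_swap_le_sum_sum _ fun i j => sq_nonneg _) hb
    _ ≤ 2 * ∑ i, ∑ j ∈ univ.filter (fun j => i < j), l i * l j * x j i * x i j := by
        simp only [mul_sum, ← sum_neg_distrib]
        gcongr with i _ j hj
        exact neg_mul_sq_add_sq_le_two_mul (mul_nonneg (hl i) (hl j))
          (hlb i j (mem_filter.mp hj).2.ne) _ _

end CrossTerms

open Finset in
theorem second_fundamental_form_estimate_general (n m : ℕ) (l : Fin n → ℝ) (hl : ∀ i, 0 ≤ l i)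
    (δ : ℝ) (hδ1 : δ ≤ 1)
    (harea : ∀ i j : Fin n, i ≠ j → l i * l j ≤ 1 - δ)
    (A : Fin m → Fin n → Fin n → ℝ)
    (h : Fin n → Fin n → Fin n → ℝ)
    (hh : ∀ i : Fin n, ∀ j k : Fin n,
      h i j k = if hi : (i : ℕ) < m then A ⟨i, hi⟩ j k else 0) :
    δ * (∑ α, ∑ i, ∑ k, A α i k ^ 2) ≤
      (∑ α, ∑ i, ∑ k, A α i k ^ 2) + (∑ k, ∑ i, l i ^ 2 * h i i k ^ 2)
        + 2 * ∑ k, ∑ i, ∑ j ∈ univ.filter (fun j => i < j),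
            l i * l j * h j i k * h i j k := by
  set S := ∑ α, ∑ i, ∑ k, A α i k ^ 2
  have hb : 0 ≤ 1 - δ := sub_nonneg.2 hδ1
  have h_le_A : ∑ k, ∑ i, ∑ j, h i j k ^ 2 ≤ S := by
    calc ∑ k, ∑ i, ∑ j, h i j k ^ 2
        = ∑ i : Fin n, (if hi : (i : ℕ) < m then ∑ j, ∑ k, A ⟨i, hi⟩ j k ^ 2 else 0) := by
          rw [sum_comm]
          refine sum_congr rfl fun i _ => ?_
          rw [sum_comm]
          split_ifs with hi <;> simp [hh, hi]
      _ ≤ S := sum_dite_lt_le_sum n (fun α => ∑ j, ∑ k, A α j k ^ 2) fun α => by positivity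
  have h_cross : -((1 - δ) * S) ≤ 2 * ∑ k, ∑ i, ∑ j ∈ univ.filter (fun j => i < j),
      l i * l j * h j i k * h i j k := by
    calc -((1 - δ) * S) ≤ -((1 - δ) * ∑ k, ∑ i, ∑ j, h i j k ^ 2) :=
          neg_le_neg (mul_le_mul_of_nonneg_left h_le_A hb)
      _ ≤ _ := by
          rw [mul_sum, mul_sum, ← sum_neg_distrib]
          exact sum_le_sum fun k _ =>
            neg_mul_sum_sq_le_two_mul_sum_cross l hl hb harea fun i j => h i j k
  have h_diag : 0 ≤ ∑ k, ∑ i, l i ^ 2 * h i i k ^ 2 := by positivity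
  linarith

open Finset in
/-- The good quadratic term in the evolution equation of `ln *Ω` is bounded below by `δ|A|²`. -/
theorem second_fundamental_form_estimate (n m : ℕ) (l : Fin n → ℝ) (hl : ∀ i, 0 ≤ l i)
    (δ : ℝ) (hδ : 0 < δ) (hδ1 : δ ≤ 1)
    (harea : ∀ i j : Fin n, i ≠ j → l i * l j ≤ 1 - δ)
    (A : Fin m → Fin n → Fin n → ℝ)
    (h : Fin n → Fin n → Fin n → ℝ)
    (hh : ∀ i : Fin n, ∀ j k : Fin n,
      h i j k = if hi : (i : ℕ) < m then A ⟨i, hi⟩ j k else 0) :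
    δ * (∑ α, ∑ i, ∑ k, A α i k ^ 2) ≤
      (∑ α, ∑ i, ∑ k, A α i k ^ 2) + (∑ k, ∑ i, l i ^ 2 * h i i k ^ 2)
        + 2 * ∑ k, ∑ i, ∑ j ∈ univ.filter (fun j => i < j),
            l i * l j * h j i k * h i j k :=
  second_fundamental_form_estimate_general n m l hl δ hδ1 harea A h hh
end

section
/- Suppose k₁ ≥ |k₂| and nonnegative reals λ₁, …, λₙ (n ≥ 2) satisfy λ₁λ₂ < 1 and λⱼ < 1 for j ≥ 3. Then the curvature contribution Σ_{i=1}^{2} (λᵢ²/(1+λᵢ²)²)·[(k₁-k₂)(n-1) + (k₁+k₂)·Σ_{j≠i}(1-λⱼ²)/(1+λⱼ²)] is nonnegative. -/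
open Finset in
/-- Nonnegativity of the ambient curvature contribution (5.11) at a null eigenvector `e₁ ∧ e₂`. -/
theorem ambient_curvature_nonneg (n : ℕ) (hn : 2 ≤ n) (k₁ k₂ : ℝ) (hk : |k₂| ≤ k₁)
    (l : ℕ → ℝ) (hl : ∀ i < n, 0 ≤ l i)
    (h12 : l 0 * l 1 < 1) (hrest : ∀ j, 2 ≤ j → j < n → l j < 1) :
    0 ≤ l 0 ^ 2 / (1 + l 0 ^ 2) ^ 2 *
          ((k₁ - k₂) * ((n : ℝ) - 1)
            + (k₁ + k₂) * ∑ j ∈ (range n).erase 0, (1 - l j ^ 2) / (1 + l j ^ 2))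
        + l 1 ^ 2 / (1 + l 1 ^ 2) ^ 2 *
          ((k₁ - k₂) * ((n : ℝ) - 1)
            + (k₁ + k₂) * ∑ j ∈ (range n).erase 1, (1 - l j ^ 2) / (1 + l j ^ 2)) := by
  set F : ℕ → ℝ := fun j => (1 - l j ^ 2) / (1 + l j ^ 2) with hF
  set R : ℝ := ∑ j ∈ ((range n).erase 0).erase 1, F j with hR
  have hmem1 : (1 : ℕ) ∈ (range n).erase 0 := by
    simp [Finset.mem_erase, Finset.mem_range]; omega
  have hmem0 : (0 : ℕ) ∈ (range n).erase 1 := by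
    simp [Finset.mem_erase, Finset.mem_range]; omega
  have hs0 : ∑ j ∈ (range n).erase 0, F j = F 1 + R := by
    rw [hR, Finset.add_sum_erase _ F hmem1]
  have hs1 : ∑ j ∈ (range n).erase 1, F j = F 0 + R := by
    rw [hR, Finset.erase_right_comm, Finset.add_sum_erase _ F hmem0]
  have hRnn : 0 ≤ R := by
    apply Finset.sum_nonneg
    intro j hj
    simp only [Finset.mem_erase, Finset.mem_range] at hj
    obtain ⟨hj1, hj0, hjn⟩ := hj
    have h2j : 2 ≤ j := by omega
    have hlt := hrest j h2j hjn
    have hge := hl j hjn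
    have : l j ^ 2 < 1 := by nlinarith
    have hden : (0:ℝ) < 1 + l j ^ 2 := by positivity
    exact div_nonneg (by linarith) hden.le
  have ha := hl 0 (by omega)
  have hb := hl 1 (by omega)
  set a := l 0
  set b := l 1
  have hda : (0:ℝ) < 1 + a ^ 2 := by positivity
  have hdb : (0:ℝ) < 1 + b ^ 2 := by positivity
  have hc0 : 0 ≤ a ^ 2 / (1 + a ^ 2) ^ 2 := by positivity
  have hc1 : 0 ≤ b ^ 2 / (1 + b ^ 2) ^ 2 := by positivity
  have hk1 : 0 ≤ k₁ - k₂ := by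
    have := abs_le.mp hk; linarith [this.2]
  have hk2 : 0 ≤ k₁ + k₂ := by
    have := abs_le.mp hk; linarith [this.1]
  have hn1 : (0:ℝ) ≤ (n:ℝ) - 1 := by
    have : (2:ℝ) ≤ (n:ℝ) := by exact_mod_cast hn
    linarith
  have hcross : 0 ≤ a ^ 2 / (1 + a ^ 2) ^ 2 * F 1 + b ^ 2 / (1 + b ^ 2) ^ 2 * F 0 := by
    have hFb : F 1 = (1 - b ^ 2) / (1 + b ^ 2) := rfl
    have hFa : F 0 = (1 - a ^ 2) / (1 + a ^ 2) := rfl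
    rw [hFb, hFa]
    have heq : a ^ 2 / (1 + a ^ 2) ^ 2 * ((1 - b ^ 2) / (1 + b ^ 2))
        + b ^ 2 / (1 + b ^ 2) ^ 2 * ((1 - a ^ 2) / (1 + a ^ 2))
        = (a ^ 2 + b ^ 2) * (1 - (a * b) ^ 2) / ((1 + a ^ 2) ^ 2 * (1 + b ^ 2) ^ 2) := by
      field_simp
      ring
    rw [heq]
    have hab : 0 ≤ a * b := mul_nonneg ha hb
    have : (a * b) ^ 2 < 1 := by nlinarith
    have hnum : 0 ≤ (a ^ 2 + b ^ 2) * (1 - (a * b) ^ 2) := by nlinarith [sq_nonneg a, sq_nonneg b]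
    positivity
  rw [hs0, hs1]
  have e1 : 0 ≤ (k₁ - k₂) * ((n:ℝ) - 1) * (a ^ 2 / (1 + a ^ 2) ^ 2 + b ^ 2 / (1 + b ^ 2) ^ 2) :=
    mul_nonneg (mul_nonneg hk1 hn1) (by linarith)
  have e2 : 0 ≤ (k₁ + k₂) * R * (a ^ 2 / (1 + a ^ 2) ^ 2 + b ^ 2 / (1 + b ^ 2) ^ 2) :=
    mul_nonneg (mul_nonneg hk2 hRnn) (by linarith)
  have e3 : 0 ≤ (k₁ + k₂) * (a ^ 2 / (1 + a ^ 2) ^ 2 * F 1 + b ^ 2 / (1 + b ^ 2) ^ 2 * F 0) :=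
    mul_nonneg hk2 hcross
  nlinarith [e1, e2, e3]
end

section
/- Let P be a self-adjoint operator on an n-dimensional inner product space (n ≥ 2). Then P^[2] is positive definite if and only if the sum of any two eigenvalues of P is positive (P is two-positive). -/
/-!
Identify `Λ²ℝⁿ` with the skew-symmetric matrices via `e_a ∧ e_b ↦ e_a e_bᵀ - e_b e_aᵀ`. Under this
identification the quadratic form of `P^[2]` becomes `X ↦ tr (Xᵀ P X)`. Writing `P = U D Uᵀ` with
`U` orthogonal and `D = diag μ`, and replacing `X` by the skew matrix `Y = Uᵀ X U`, the form becomes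
`tr (Yᵀ D Y) = ∑_{i < j} (μ i + μ j) Y_ij²`, which is positive for every nonzero skew `Y` exactly
when `μ i + μ j > 0` for all `i ≠ j`.
-/

open Matrix

namespace Matrix

section Trace

variable {n R : Type*} [Fintype n] [DecidableEq n] [CommRing R]

theorem trace_transpose_mul_diagonal_mul_self (μ : n → R) (Y : Matrix n n R) :
    trace (Yᵀ * diagonal μ * Y) = ∑ i, ∑ j, μ i * Y i j ^ 2 := by
  simp only [trace, diag, mul_apply (M := Yᵀ * diagonal μ), mul_diagonal, transpose_apply]
  rw [Finset.sum_comm]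
  exact Finset.sum_congr rfl fun _ _ => Finset.sum_congr rfl fun _ _ => by ring

theorem trace_transpose_mul_diagonal_mul_self_pos [LinearOrder R] [IsStrictOrderedRing R]
    {μ : n → R} {Y : Matrix n n R} (hY : Yᵀ = -Y) (hY0 : Y ≠ 0)
    (hμ : ∀ i j, i ≠ j → 0 < μ i + μ j) :
    0 < trace (Yᵀ * diagonal μ * Y) := by
  have hskew : ∀ i j, Y j i = -Y i j := fun i j => congrFun (congrFun hY i) j
  have hdiag : ∀ i, Y i i = 0 := fun i => by linarith [hskew i i]
  have htwice : 2 * trace (Yᵀ * diagonal μ * Y) = ∑ i, ∑ j, (μ i + μ j) * Y i j ^ 2 := by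
    rw [trace_transpose_mul_diagonal_mul_self, two_mul]
    nth_rewrite 2 [Finset.sum_comm]
    rw [← Finset.sum_add_distrib]
    refine Finset.sum_congr rfl fun i _ => ?_
    rw [← Finset.sum_add_distrib]
    refine Finset.sum_congr rfl fun j _ => ?_
    rw [hskew i j]
    ring
  have hterm : ∀ i j, 0 ≤ (μ i + μ j) * Y i j ^ 2 := by
    intro i j
    rcases eq_or_ne i j with rfl | hij
    · simp [hdiag]
    · exact mul_nonneg (hμ i j hij).le (sq_nonneg _)
  obtain ⟨i, j, hij⟩ : ∃ i j, Y i j ≠ 0 := by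
    by_contra! h
    exact hY0 (Matrix.ext h)
  have hne : i ≠ j := by
    rintro rfl
    exact hij (hdiag i)
  have hsum : 0 < ∑ i, ∑ j, (μ i + μ j) * Y i j ^ 2 :=
    Finset.sum_pos' (fun i _ => Finset.sum_nonneg fun j _ => hterm i j)
      ⟨i, Finset.mem_univ _, Finset.sum_pos' (fun j _ => hterm i j)
        ⟨j, Finset.mem_univ _, mul_pos (hμ i j hne) (by positivity)⟩⟩
  linarith

theorem transpose_mul_mul_mul_cancel {U : Matrix n n R} (hU : Uᵀ * U = 1) (A : Matrix n n R) :
    Uᵀ * (U * A * Uᵀ) * U = A := by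
  rw [← Matrix.mul_assoc, ← Matrix.mul_assoc, hU, Matrix.one_mul, Matrix.mul_assoc, hU,
    Matrix.mul_one]

theorem trace_transpose_mul_conj_mul {U : Matrix n n R} (hU : U * Uᵀ = 1) (A X : Matrix n n R) :
    trace (Xᵀ * (U * A * Uᵀ) * X) = trace ((Uᵀ * X * U)ᵀ * A * (Uᵀ * X * U)) := by
  simp only [transpose_mul, transpose_transpose, Matrix.mul_assoc]
  rw [trace_mul_comm Uᵀ]
  simp only [Matrix.mul_assoc, hU, Matrix.mul_one]

end Trace

abbrev Pairs (ι : Type*) [LinearOrder ι] := {p : ι × ι // p.1 < p.2}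

section SecondCompound

variable {ι R : Type*} [LinearOrder ι]

-- The matrix of `P^[2]` in the basis `e_a ∧ e_b`, `a < b`, of `Λ²`.
def additiveCompound [Ring R] (P : Matrix ι ι R) : Matrix (Pairs ι) (Pairs ι) R :=
  fun ab cd => P ab.1.1 cd.1.1 * (if ab.1.2 = cd.1.2 then 1 else 0)
    + P ab.1.2 cd.1.2 * (if ab.1.1 = cd.1.1 then 1 else 0)
    - P ab.1.1 cd.1.2 * (if ab.1.2 = cd.1.1 then 1 else 0)
    - P ab.1.2 cd.1.1 * (if ab.1.1 = cd.1.2 then 1 else 0)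

def wedgeSingle [Ring R] (p : Pairs ι) : Matrix ι ι R :=
  single p.1.1 p.1.2 1 - single p.1.2 p.1.1 1

def skewOfPairs [Fintype ι] [Ring R] (x : Pairs ι → R) : Matrix ι ι R :=
  ∑ p, x p • wedgeSingle p

def upperEntries (M : Matrix ι ι R) (p : Pairs ι) : R :=
  M p.1.1 p.1.2

theorem additiveCompound_transpose [CommRing R] (P : Matrix ι ι R) :
    (additiveCompound P)ᵀ = additiveCompound Pᵀ := by
  ext ab cd
  simp only [transpose_apply, additiveCompound, @eq_comm _ cd.1.1, @eq_comm _ cd.1.2]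
  ring

theorem transpose_wedgeSingle [Ring R] (p : Pairs ι) :
    (wedgeSingle p : Matrix ι ι R)ᵀ = -wedgeSingle p := by
  simp [wedgeSingle]

theorem transpose_skewOfPairs [Fintype ι] [Ring R] (x : Pairs ι → R) :
    (skewOfPairs x)ᵀ = -skewOfPairs x := by
  simp [skewOfPairs, transpose_sum, transpose_wedgeSingle]

theorem skewOfPairs_apply_of_lt [Fintype ι] [Ring R] (x : Pairs ι → R) {a b : ι} (h : a < b) :
    skewOfPairs x a b = x ⟨(a, b), h⟩ := by
  simp only [skewOfPairs, wedgeSingle, sum_apply, smul_apply, sub_apply, single_apply]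
  rw [Finset.sum_eq_single ⟨(a, b), h⟩]
  · simp [h.ne']
  · rintro ⟨⟨c, d⟩, hcd⟩ - hne
    have h₁ : ¬(c = a ∧ d = b) := by rintro ⟨rfl, rfl⟩; exact hne rfl
    have h₂ : ¬(d = a ∧ c = b) := by rintro ⟨rfl, rfl⟩; exact lt_asymm h hcd
    simp [h₁, h₂]
  · simp

theorem upperEntries_skewOfPairs [Fintype ι] [Ring R] (x : Pairs ι → R) :
    upperEntries (skewOfPairs x) = x :=
  funext fun p => skewOfPairs_apply_of_lt x p.2

theorem skewOfPairs_injective [Fintype ι] [Ring R] :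
    Function.Injective (skewOfPairs : (Pairs ι → R) → Matrix ι ι R) :=
  Function.LeftInverse.injective upperEntries_skewOfPairs

theorem skewOfPairs_upperEntries [Fintype ι] [Ring R] [NoZeroDivisors R] [CharZero R]
    {M : Matrix ι ι R} (hM : Mᵀ = -M) : skewOfPairs (upperEntries M) = M := by
  have hskew : ∀ a b, M b a = -M a b := fun a b => congrFun (congrFun hM a) b
  have hS : ∀ a b, skewOfPairs (upperEntries M) b a = -skewOfPairs (upperEntries M) a b :=
    fun a b => congrFun (congrFun (transpose_skewOfPairs (upperEntries M)) a) b
  ext a b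
  rcases lt_trichotomy a b with h | rfl | h
  · exact skewOfPairs_apply_of_lt _ h
  · rw [CharZero.eq_neg_self_iff.mp (hS a a), CharZero.eq_neg_self_iff.mp (hskew a a)]
  · rw [hS, skewOfPairs_apply_of_lt _ h, upperEntries, hskew, neg_neg]

theorem trace_wedgeSingle_mul_mul_wedgeSingle [Fintype ι] [CommRing R] (P : Matrix ι ι R)
    (p q : Pairs ι) :
    trace ((wedgeSingle p)ᵀ * P * wedgeSingle q) = additiveCompound P p q := by
  simp only [wedgeSingle, transpose_sub, transpose_single, sub_mul, mul_sub,
    single_mul_mul_single, trace_sub]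
  simp [trace, single_apply, additiveCompound, ite_and, @eq_comm _ q.1.1, @eq_comm _ q.1.2]
  ring

theorem trace_transpose_wedgeSingle_mul_diagonal_mul [Fintype ι] [CommRing R] (μ : ι → R)
    (p : Pairs ι) :
    trace ((wedgeSingle p)ᵀ * diagonal μ * wedgeSingle p) = μ p.1.1 + μ p.1.2 := by
  simp [trace_wedgeSingle_mul_mul_wedgeSingle, additiveCompound, p.2.ne, p.2.ne']

theorem dotProduct_additiveCompound_mulVec [Fintype ι] [CommRing R] (P : Matrix ι ι R)
    (x y : Pairs ι → R) :
    x ⬝ᵥ (additiveCompound P *ᵥ y) = trace ((skewOfPairs x)ᵀ * P * skewOfPairs y) := by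
  simp only [skewOfPairs, transpose_sum, transpose_smul, Matrix.sum_mul, Matrix.smul_mul,
    Matrix.mul_smul, trace_sum, trace_smul, trace_wedgeSingle_mul_mul_wedgeSingle, dotProduct,
    mulVec, Finset.mul_sum, smul_eq_mul]
  rw [Finset.sum_comm]
  exact Finset.sum_congr rfl fun _ _ => Finset.sum_congr rfl fun _ _ => by ring

theorem posDef_additiveCompound_iff [Fintype ι] {P U : Matrix ι ι ℝ} {μ : ι → ℝ}
    (hU : Uᵀ * U = 1) (hP : P = U * diagonal μ * Uᵀ) :
    (additiveCompound P).PosDef ↔ ∀ i j, i ≠ j → 0 < μ i + μ j := by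
  have hUUt : U * Uᵀ = 1 := mul_eq_one_comm.mp hU
  set Y : (Pairs ι → ℝ) → Matrix ι ι ℝ := fun x => Uᵀ * skewOfPairs x * U
  have hquad (x : Pairs ι → ℝ) :
      star x ⬝ᵥ (additiveCompound P *ᵥ x) = trace ((Y x)ᵀ * diagonal μ * Y x) := by
    rw [star_trivial, dotProduct_additiveCompound_mulVec, hP, trace_transpose_mul_conj_mul hUUt]
  constructor
  · intro hpos i j hij
    wlog hlt : i < j generalizing i j
    · linarith [this j i hij.symm (hij.lt_or_gt.resolve_left hlt)]
    set p : Pairs ι := ⟨(i, j), hlt⟩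
    set x := upperEntries (U * wedgeSingle p * Uᵀ)
    have hx : skewOfPairs x = U * wedgeSingle p * Uᵀ :=
      skewOfPairs_upperEntries (by simp [transpose_mul, transpose_wedgeSingle, Matrix.mul_assoc])
    have hYx : Y x = wedgeSingle p := by
      simp only [Y, hx, transpose_mul_mul_mul_cancel hU]
    have hx0 : x ≠ 0 := by
      intro h0
      have h := congrFun (congrFun hYx i) j
      simp [Y, h0, skewOfPairs, wedgeSingle, p, hlt.ne] at h
    have h := hpos.dotProduct_mulVec_pos hx0
    rwa [hquad, hYx, trace_transpose_wedgeSingle_mul_diagonal_mul] at h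
  · intro hμ
    refine posDef_iff_dotProduct_mulVec.mpr ⟨?_, fun x hx => ?_⟩
    · have hPt : Pᵀ = P := by simp [hP, transpose_mul, Matrix.mul_assoc]
      rw [isHermitian_iff_isSymm, IsSymm, additiveCompound_transpose, hPt]
    · rw [hquad]
      refine trace_transpose_mul_diagonal_mul_self_pos ?_ ?_ hμ
      · simp [Y, transpose_mul, transpose_skewOfPairs, Matrix.mul_assoc]
      · intro h0
        apply hx
        apply skewOfPairs_injective
        calc skewOfPairs x = U * Y x * Uᵀ :=
              (transpose_mul_mul_mul_cancel (U := Uᵀ) (by rwa [transpose_transpose]) _).symm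
          _ = skewOfPairs 0 := by simp [h0, skewOfPairs]

end SecondCompound

end Matrix

theorem two_positive_iff_posdef_general (n : ℕ)
    (P : Matrix (Fin n) (Fin n) ℝ) (hP : P.IsHermitian)
    (P2 : Matrix {p : Fin n × Fin n // p.1 < p.2} {p : Fin n × Fin n // p.1 < p.2} ℝ)
    (hP2 : ∀ ab cd : {p : Fin n × Fin n // p.1 < p.2},
      P2 ab cd = P ab.1.1 cd.1.1 * (if ab.1.2 = cd.1.2 then 1 else 0)
        + P ab.1.2 cd.1.2 * (if ab.1.1 = cd.1.1 then 1 else 0)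
        - P ab.1.1 cd.1.2 * (if ab.1.2 = cd.1.1 then 1 else 0)
        - P ab.1.2 cd.1.1 * (if ab.1.1 = cd.1.2 then 1 else 0)) :
    P2.PosDef ↔ ∀ i j : Fin n, i ≠ j → 0 < hP.eigenvalues i + hP.eigenvalues j := by
  obtain rfl : P2 = additiveCompound P := Matrix.ext hP2
  set U : Matrix (Fin n) (Fin n) ℝ := ↑hP.eigenvectorUnitary
  have hU : Uᵀ * U = 1 := by
    simpa [star_eq_conjTranspose] using Unitary.coe_star_mul_self hP.eigenvectorUnitary
  refine posDef_additiveCompound_iff hU ?_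
  simpa [Unitary.conjStarAlgAut_apply, star_eq_conjTranspose, RCLike.ofReal_real_eq_id] using
    hP.spectral_theorem

/-- `P^[2]` (expressed as the matrix `S^[2]` of (5.2) on pairs `a < b`) is positive definite
iff the sum of any two eigenvalues of `P` is positive. -/
theorem two_positive_iff_posdef (n : ℕ) (hn : 2 ≤ n)
    (P : Matrix (Fin n) (Fin n) ℝ) (hP : P.IsHermitian)
    (P2 : Matrix {p : Fin n × Fin n // p.1 < p.2} {p : Fin n × Fin n // p.1 < p.2} ℝ)
    (hP2 : ∀ ab cd : {p : Fin n × Fin n // p.1 < p.2},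
      P2 ab cd = P ab.1.1 cd.1.1 * (if ab.1.2 = cd.1.2 then 1 else 0)
        + P ab.1.2 cd.1.2 * (if ab.1.1 = cd.1.1 then 1 else 0)
        - P ab.1.1 cd.1.2 * (if ab.1.2 = cd.1.1 then 1 else 0)
        - P ab.1.2 cd.1.1 * (if ab.1.1 = cd.1.2 then 1 else 0)) :
    P2.PosDef ↔ ∀ i j : Fin n, i ≠ j → 0 < hP.eigenvalues i + hP.eigenvalues j :=
  two_positive_iff_posdef_general n P hP P2 hP2
end

section
/- Let f : V → W be a linear map between finite-dimensional inner product spaces with singular values λ₁, …, λₙ (n = dim V, n ≥ 2). Define S on V ⊕ W restricted to the graph of f by S(X,Y) = ⟨π₁X, π₁Y⟩ - ⟨π₂X, π₂Y⟩. Then, with respect to the orthonormal basis eᵢ = (aᵢ + λᵢ a_{n+i})/√(1+λᵢ²) of the graph coming from the singular value decomposition, S(eᵢ, eⱼ) = δᵢⱼ(1-λᵢ²)/(1+λᵢ²). In particular, S restricted to the graph is positive definite iff all λᵢ < 1, and S^[2] is positive definite iff λᵢλⱼ < 1 for all i ≠ j. -/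
/-!
In the orthonormal families `aᵢ`, `bᵢ` the graph vectors `(aᵢ, λᵢ bᵢ)` are pairwise
`S`-orthogonal, and `S` of such a vector with itself is `1 - λᵢ²`; normalising by
`√(1 + λᵢ²)` gives the diagonal entries. A diagonal quadratic form is positive definite iff its
diagonal entries are positive, and the remaining claims are inequalities between real numbers.
-/

section DiagonalForm

variable {ι R M : Type*} [Fintype ι] [DecidableEq ι] [CommRing R] [AddCommGroup M] [Module R M]

theorem LinearMap.BilinForm.apply_sum_smul_of_diagonal (B : LinearMap.BilinForm R M)
    {e : ι → M} {d : ι → R} (hB : ∀ i j, B (e i) (e j) = if i = j then d i else 0)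
    (c : ι → R) :
    B (∑ i, c i • e i) (∑ i, c i • e i) = ∑ i, c i ^ 2 * d i := by
  simp only [map_sum, map_smul, LinearMap.sum_apply, LinearMap.smul_apply, hB, smul_eq_mul,
    mul_ite, mul_zero, Finset.sum_ite_eq', Finset.mem_univ, if_true]
  exact Finset.sum_congr rfl fun i _ => by ring

end DiagonalForm

theorem forall_sum_sq_mul_pos_iff {ι : Type*} [Fintype ι] [DecidableEq ι] (d : ι → ℝ) :
    (∀ c : ι → ℝ, c ≠ 0 → 0 < ∑ i, c i ^ 2 * d i) ↔ ∀ i, 0 < d i := by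
  refine ⟨fun h i => ?_, fun h c hc => ?_⟩
  · simpa [Pi.single_apply] using h (Pi.single i 1) (by simp)
  · obtain ⟨i, hi⟩ := Function.ne_iff.mp hc
    exact Finset.sum_pos' (fun j _ => mul_nonneg (sq_nonneg _) (h j).le)
      ⟨i, Finset.mem_univ i, mul_pos (sq_pos_of_ne_zero hi) (h i)⟩

theorem one_sub_sq_div_one_add_sq_pos_iff {x : ℝ} (hx : 0 ≤ x) :
    0 < (1 - x ^ 2) / (1 + x ^ 2) ↔ x < 1 := by
  rw [div_pos_iff_of_pos_right (by positivity), sub_pos, sq_lt_one_iff₀ hx]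

theorem one_sub_sq_div_one_add_sq_add_pos_iff {x y : ℝ} (hx : 0 ≤ x) (hy : 0 ≤ y) :
    0 < (1 - x ^ 2) / (1 + x ^ 2) + (1 - y ^ 2) / (1 + y ^ 2) ↔ x * y < 1 := by
  have hx' : (0 : ℝ) < 1 + x ^ 2 := by positivity
  have hy' : (0 : ℝ) < 1 + y ^ 2 := by positivity
  -- the numerator of the sum is `2 (1 - (x y)²)`
  rw [div_add_div _ _ hx'.ne' hy'.ne', div_pos_iff_of_pos_right (mul_pos hx' hy'),
    ← sq_lt_one_iff₀ (mul_nonneg hx hy)]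
  constructor <;> intro h <;> nlinarith

section DifferenceInnerForm

open RealInnerProductSpace

variable (V W : Type*) [NormedAddCommGroup V] [InnerProductSpace ℝ V]
    [NormedAddCommGroup W] [InnerProductSpace ℝ W]

noncomputable def differenceInnerForm : LinearMap.BilinForm ℝ (V × W) :=
  (innerₗ V).compl₁₂ (LinearMap.fst ℝ V W) (LinearMap.fst ℝ V W) -
    (innerₗ W).compl₁₂ (LinearMap.snd ℝ V W) (LinearMap.snd ℝ V W)

variable {V W}

@[simp]
theorem differenceInnerForm_apply (X Y : V × W) :
    differenceInnerForm V W X Y = ⟪X.1, Y.1⟫ - ⟪X.2, Y.2⟫ := rfl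

theorem differenceInnerForm_of_orthonormal {ι : Type*} [DecidableEq ι]
    {a : ι → V} (ha : Orthonormal ℝ a) {b : ι → W} (hb : Orthonormal ℝ b) {s l : ι → ℝ}
    {e : ι → V × W} (he : ∀ i, e i = s i • (a i, l i • b i)) (i j : ι) :
    differenceInnerForm V W (e i) (e j) = if i = j then s i ^ 2 * (1 - l i ^ 2) else 0 := by
  simp only [he, differenceInnerForm_apply, Prod.smul_fst, Prod.smul_snd, real_inner_smul_left,
    real_inner_smul_right, orthonormal_iff_ite.mp ha, orthonormal_iff_ite.mp hb]
  split_ifs with h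
  · subst h; ring
  · ring

end DifferenceInnerForm

open RealInnerProductSpace in
theorem tensor_S_on_graph_general
    {V W : Type*} [NormedAddCommGroup V] [InnerProductSpace ℝ V]
    [NormedAddCommGroup W] [InnerProductSpace ℝ W]
    (n : ℕ)
    (l : Fin n → ℝ) (hl : ∀ i, 0 ≤ l i)
    (a : Fin n → V) (ha : Orthonormal ℝ a)
    (b : Fin n → W) (hb : Orthonormal ℝ b)
    (S : V × W → V × W → ℝ)
    (hS : ∀ X Y : V × W, S X Y = ⟪X.1, Y.1⟫ - ⟪X.2, Y.2⟫)
    (e : Fin n → V × W)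
    (he : ∀ i, e i = (Real.sqrt (1 + l i ^ 2))⁻¹ • (a i, l i • b i)) :
    (∀ i j, S (e i) (e j) = if i = j then (1 - l i ^ 2) / (1 + l i ^ 2) else 0) ∧
    ((∀ c : Fin n → ℝ, c ≠ 0 → 0 < S (∑ i, c i • e i) (∑ i, c i • e i)) ↔
      ∀ i, l i < 1) ∧
    ((∀ i j, i ≠ j → 0 < S (e i) (e i) + S (e j) (e j)) ↔
      ∀ i j, i ≠ j → l i * l j < 1) := by
  simp only [show S = fun X Y => differenceInnerForm V W X Y from funext₂ hS]
  have hdiag (i j : Fin n) : differenceInnerForm V W (e i) (e j) =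
      if i = j then (1 - l i ^ 2) / (1 + l i ^ 2) else 0 := by
    rw [differenceInnerForm_of_orthonormal ha hb he, inv_pow,
      Real.sq_sqrt (by positivity), inv_mul_eq_div]
  refine ⟨hdiag, ?_, ?_⟩
  · simp only [(differenceInnerForm V W).apply_sum_smul_of_diagonal hdiag,
      forall_sum_sq_mul_pos_iff, one_sub_sq_div_one_add_sq_pos_iff (hl _)]
  · simp only [hdiag, if_true, one_sub_sq_div_one_add_sq_add_pos_iff (hl _) (hl _)]

open RealInnerProductSpace in
/-- The tensor `S(X,Y) = ⟨π₁X,π₁Y⟩ - ⟨π₂X,π₂Y⟩` is diagonal on the graph of `f` in the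
singular value bases, with eigenvalues `(1-λᵢ²)/(1+λᵢ²)`; positivity characterizations. -/
theorem tensor_S_on_graph
    {V W : Type*} [NormedAddCommGroup V] [InnerProductSpace ℝ V]
    [NormedAddCommGroup W] [InnerProductSpace ℝ W]
    (n : ℕ) (hn : 2 ≤ n) (f : V →ₗ[ℝ] W)
    (l : Fin n → ℝ) (hl : ∀ i, 0 ≤ l i)
    (a : Fin n → V) (ha : Orthonormal ℝ a)
    (b : Fin n → W) (hb : Orthonormal ℝ b)
    (hf : ∀ i, f (a i) = l i • b i)
    (S : V × W → V × W → ℝ)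
    (hS : ∀ X Y : V × W, S X Y = ⟪X.1, Y.1⟫ - ⟪X.2, Y.2⟫)
    (e : Fin n → V × W)
    (he : ∀ i, e i = (Real.sqrt (1 + l i ^ 2))⁻¹ • (a i, l i • b i)) :
    (∀ i j, S (e i) (e j) = if i = j then (1 - l i ^ 2) / (1 + l i ^ 2) else 0) ∧
    ((∀ c : Fin n → ℝ, c ≠ 0 → 0 < S (∑ i, c i • e i) (∑ i, c i • e i)) ↔
      ∀ i, l i < 1) ∧
    ((∀ i j, i ≠ j → 0 < S (e i) (e i) + S (e j) (e j)) ↔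
      ∀ i j, i ≠ j → l i * l j < 1) :=
  tensor_S_on_graph_general n l hl a ha b hb S hS e he
end

section
/- If nonnegative reals λ₁, …, λₙ satisfy λᵢ² ≤ (1-ε)/ε for all i and λᵢλⱼ ≤ √(1-ε) for all i ≠ j (with 0 < ε < 1, n ≥ 2, and k₁ + k₂ > 0), then there exists c₁ > 0 depending only on ε, k₁, k₂, n such that (k₁+k₂)·Σ_{i<j} (λᵢ²+λⱼ²-2λᵢ²λⱼ²)/(2(1+λᵢ²)(1+λⱼ²)) ≥ c₁·Σᵢ λᵢ². -/
/-!
For a single pair, `λᵢλⱼ ≤ √(1-ε)` together with AM-GM gives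
`2λᵢ²λⱼ² ≤ √(1-ε) (λᵢ² + λⱼ²)`, so the numerator is at least `(1 - √(1-ε)) (λᵢ² + λⱼ²)`, while
`λᵢ² ≤ (1-ε)/ε` bounds the denominator by `2/ε²`. Summing over pairs `i < j` counts every
`λᵢ²` exactly `n - 1` times, which gives `c₁ = (k₁ + k₂) (1 - √(1-ε)) ε² (n - 1) / 2`.
-/

open Finset

theorem card_filter_lt_add_card_filter_gt {α : Type*} [Fintype α] [LinearOrder α] (i : α) :
    #{j | i < j} + #{j | j < i} = Fintype.card α - 1 := by
  rw [← card_union_of_disjoint (disjoint_filter.2 fun j _ h h' => lt_asymm h h'), ← filter_or]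
  simp_rw [← ne_iff_lt_or_gt, ne_comm (a := i)]
  rw [filter_ne', card_erase_of_mem (mem_univ i), card_univ]

theorem sum_sum_filter_lt_add {α M : Type*} [Fintype α] [LinearOrder α] [AddCommMonoid M]
    (a : α → M) :
    ∑ i, ∑ j ∈ univ.filter (fun j => i < j), (a i + a j) = (Fintype.card α - 1) • ∑ i, a i := by
  have swap : ∑ i, ∑ j ∈ univ.filter (fun j => i < j), a j
      = ∑ j, ∑ i ∈ univ.filter (fun i => i < j), a j :=
    sum_comm' fun i j => by simp
  simp_rw [sum_add_distrib, swap, sum_const, ← sum_add_distrib, ← add_nsmul,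
    card_filter_lt_add_card_filter_gt, smul_sum]

theorem one_sub_mul_sq_add_sq_le {x y s : ℝ} (hxy0 : 0 ≤ x * y) (hxy : x * y ≤ s) :
    (1 - s) * (x ^ 2 + y ^ 2) ≤ x ^ 2 + y ^ 2 - 2 * x ^ 2 * y ^ 2 := by
  have hamgm : 2 * (x * y) ≤ x ^ 2 + y ^ 2 := by linarith [two_mul_le_add_sq x y]
  nlinarith [mul_le_mul hxy hamgm (by positivity) (hxy0.trans hxy)]

theorem one_add_le_inv_of_le_one_sub_div {ε a : ℝ} (hε : 0 < ε) (ha : a ≤ (1 - ε) / ε) :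
    1 + a ≤ ε⁻¹ := by
  rw [sub_div, div_self hε.ne', one_div] at ha
  linarith

theorem pair_term_lower_bound {ε x y : ℝ} (hε : 0 < ε) (hx : 0 ≤ x) (hy : 0 ≤ y)
    (hx2 : x ^ 2 ≤ (1 - ε) / ε) (hy2 : y ^ 2 ≤ (1 - ε) / ε)
    (hxy : x * y ≤ Real.sqrt (1 - ε)) :
    (1 - Real.sqrt (1 - ε)) * ε ^ 2 / 2 * (x ^ 2 + y ^ 2) ≤
      (x ^ 2 + y ^ 2 - 2 * x ^ 2 * y ^ 2) / (2 * (1 + x ^ 2) * (1 + y ^ 2)) := by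
  have hs : 0 ≤ 1 - Real.sqrt (1 - ε) := sub_nonneg.2 (Real.sqrt_le_one.2 (by linarith))
  have hnum := one_sub_mul_sq_add_sq_le (mul_nonneg hx hy) hxy
  have hnum0 : 0 ≤ x ^ 2 + y ^ 2 - 2 * x ^ 2 * y ^ 2 := (mul_nonneg hs (by positivity)).trans hnum
  have hden : 2 * (1 + x ^ 2) * (1 + y ^ 2) ≤ 2 / ε ^ 2 := by
    have := mul_le_mul (one_add_le_inv_of_le_one_sub_div hε hx2)
      (one_add_le_inv_of_le_one_sub_div hε hy2) (by positivity) (by positivity)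
    have h2 : 2 / ε ^ 2 = 2 * (ε⁻¹ * ε⁻¹) := by ring
    linear_combination 2 * this + h2
  calc (1 - Real.sqrt (1 - ε)) * ε ^ 2 / 2 * (x ^ 2 + y ^ 2)
      = ε ^ 2 / 2 * ((1 - Real.sqrt (1 - ε)) * (x ^ 2 + y ^ 2)) := by ring
    _ ≤ ε ^ 2 / 2 * (x ^ 2 + y ^ 2 - 2 * x ^ 2 * y ^ 2) := by gcongr
    _ = (x ^ 2 + y ^ 2 - 2 * x ^ 2 * y ^ 2) / (2 / ε ^ 2) := by field_simp
    _ ≤ _ := div_le_div_of_nonneg_left hnum0 (by positivity) hden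

open Finset in
theorem curvature_term_lower_bound_general (n : ℕ) (hn : 2 ≤ n) (ε k₁ k₂ : ℝ)
    (hε : 0 < ε) (hk : 0 < k₁ + k₂) :
    ∃ c₁ > 0, ∀ l : Fin n → ℝ, (∀ i, 0 ≤ l i) →
      (∀ i, l i ^ 2 ≤ (1 - ε) / ε) →
      (∀ i j, i ≠ j → l i * l j ≤ Real.sqrt (1 - ε)) →
      c₁ * ∑ i, l i ^ 2 ≤
        (k₁ + k₂) * ∑ i, ∑ j ∈ univ.filter (fun j => i < j),
          (l i ^ 2 + l j ^ 2 - 2 * l i ^ 2 * l j ^ 2) /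
            (2 * (1 + l i ^ 2) * (1 + l j ^ 2)) := by
  set C := (1 - Real.sqrt (1 - ε)) * ε ^ 2 / 2
  have hC : 0 < C := by
    have : Real.sqrt (1 - ε) < 1 := (Real.sqrt_lt' one_pos).2 (by linarith)
    have : 0 < 1 - Real.sqrt (1 - ε) := by linarith
    positivity
  have hn1 : (0 : ℝ) < n - 1 := by
    have : (2 : ℝ) ≤ n := by exact_mod_cast hn
    linarith
  refine ⟨(k₁ + k₂) * (C * (n - 1)), by positivity, fun l hl hl2 hll => ?_⟩
  have hpairs : ∑ i, ∑ j ∈ univ.filter (fun j => i < j), C * (l i ^ 2 + l j ^ 2)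
      = C * (n - 1) * ∑ i, l i ^ 2 := by
    rw [← sum_congr rfl fun i _ => mul_sum .., ← mul_sum, sum_sum_filter_lt_add, nsmul_eq_mul,
      Fintype.card_fin, Nat.cast_pred (by omega), mul_assoc]
  rw [mul_assoc]
  gcongr
  rw [← hpairs]
  gcongr with i _ j hj
  exact pair_term_lower_bound hε (hl i) (hl j) (hl2 i) (hl2 j)
    (hll i j (mem_filter.1 hj).2.ne)

open Finset in
/-- Inequality (6.4): the curvature term dominates a multiple of `∑ λᵢ²`. -/
theorem curvature_term_lower_bound (n : ℕ) (hn : 2 ≤ n) (ε k₁ k₂ : ℝ)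
    (hε : 0 < ε) (hε1 : ε < 1) (hk : 0 < k₁ + k₂) :
    ∃ c₁ > 0, ∀ l : Fin n → ℝ, (∀ i, 0 ≤ l i) →
      (∀ i, l i ^ 2 ≤ (1 - ε) / ε) →
      (∀ i j, i ≠ j → l i * l j ≤ Real.sqrt (1 - ε)) →
      c₁ * ∑ i, l i ^ 2 ≤
        (k₁ + k₂) * ∑ i, ∑ j ∈ univ.filter (fun j => i < j),
          (l i ^ 2 + l j ^ 2 - 2 * l i ^ 2 * l j ^ 2) /
            (2 * (1 + l i ^ 2) * (1 + l j ^ 2)) :=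
  curvature_term_lower_bound_general n hn ε k₁ k₂ hε hk
end

section
/- Let S be the symmetric operator with block form (in the decomposition given by singular value bases) having tangent-tangent block diag((1-λᵢ²)/(1+λᵢ²)), mixed block diag(-2λᵢ/(1+λᵢ²)), and normal-normal block diag(-(1-λᵢ²)/(1+λᵢ²)) (and -1 on the complement). If the tangential restriction satisfies Sᵢᵢ ≥ ε for all i, then for any vector V ∈ ℝⁿ and any second-fundamental-form array h, the quantity -2 Σ h_{α,k,i} h_{β,k,j} S_{αβ} Vⁱ Vʲ = Σ_{p,q≤r} 2 h_{n+p,k,i} h_{n+q,k,j} (-S^N)_{pq} VⁱVʲ + Σ_{p>r} 2 (h_{n+p,k,i}Vⁱ)² is nonnegative, where (-S^N)_{pq} = δ_{pq}(1-λ_p²)/(1+λ_p²) ≥ ε δ_{pq}. -/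
/-!
Contracting the second fundamental form with `V` turns the quadruple sum into the quadratic form
of the normal block `Sᴺ` evaluated at the vectors `a_k = (Σᵢ h_{pki} Vⁱ)_p`. Since `Sᴺ` is
diagonal with entries `-(1-λ_p²)/(1+λ_p²)` (for `p < r`) and `-1` (for `p ≥ r`), the term becomes
a sum of squares with coefficients `2(1-λ_p²)/(1+λ_p²) ≥ 2ε ≥ 0` and `2`.
-/

open Finset

theorem sum_mul_mul_diagonal_eq_sum_sq {ι κ R : Type*} [Fintype ι] [Fintype κ] [DecidableEq ι]
    [CommSemiring R] (h : ι → κ → R) (V : κ → R) (d : ι → R) (S : ι → ι → R)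
    (hS : ∀ p q, S p q = if p = q then d p else 0) :
    ∑ p, ∑ q, ∑ i, ∑ j, h p i * h q j * S p q * V i * V j
      = ∑ p, d p * (∑ i, h p i * V i) ^ 2 := by
  refine sum_congr rfl fun p _ => ?_
  rw [sum_eq_single p (fun q _ hqp => by simp [hS, Ne.symm hqp]) (by simp), hS, if_pos rfl,
    sq, sum_mul_sum, mul_sum]
  refine sum_congr rfl fun i _ => ?_
  rw [mul_sum]
  exact sum_congr rfl fun j _ => by ring

open Finset in
theorem null_vector_term_nonneg_general (n r : ℕ) (l : Fin n → ℝ)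
    (ε : ℝ) (hε : 0 ≤ ε)
    (hpos : ∀ p : Fin n, (p : ℕ) < r → ε ≤ (1 - l p ^ 2) / (1 + l p ^ 2))
    (Snn : Fin n → Fin n → ℝ)
    (hSnn : ∀ p q, Snn p q =
      if p = q then -(if (p : ℕ) < r then (1 - l p ^ 2) / (1 + l p ^ 2) else 1) else 0)
    (h : Fin n → Fin n → Fin n → ℝ) (V : Fin n → ℝ) :
    (-2 * ∑ k, ∑ p, ∑ q, ∑ i, ∑ j, h p k i * h q k j * Snn p q * V i * V j
      = (∑ k, ∑ p ∈ univ.filter (fun p : Fin n => (p : ℕ) < r),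
          2 * (1 - l p ^ 2) / (1 + l p ^ 2) * (∑ i, h p k i * V i) ^ 2)
        + ∑ k, ∑ p ∈ univ.filter (fun p : Fin n => r ≤ (p : ℕ)),
            2 * (∑ i, h p k i * V i) ^ 2) ∧
    0 ≤ -2 * ∑ k, ∑ p, ∑ q, ∑ i, ∑ j, h p k i * h q k j * Snn p q * V i * V j := by
  have hsplit : -2 * ∑ k, ∑ p, ∑ q, ∑ i, ∑ j, h p k i * h q k j * Snn p q * V i * V j
      = (∑ k, ∑ p ∈ univ.filter (fun p : Fin n => (p : ℕ) < r),
          2 * (1 - l p ^ 2) / (1 + l p ^ 2) * (∑ i, h p k i * V i) ^ 2)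
        + ∑ k, ∑ p ∈ univ.filter (fun p : Fin n => r ≤ (p : ℕ)),
            2 * (∑ i, h p k i * V i) ^ 2 := by
    simp only [sum_mul_mul_diagonal_eq_sum_sq (fun p i => h p _ i) V _ Snn hSnn, mul_sum,
      ← sum_add_distrib]
    refine sum_congr rfl fun k _ => ?_
    have hcoeff : ∀ p : Fin n, -2 * (-(if (p : ℕ) < r then (1 - l p ^ 2) / (1 + l p ^ 2) else 1)
          * (∑ i, h p k i * V i) ^ 2)
        = if (p : ℕ) < r then 2 * (1 - l p ^ 2) / (1 + l p ^ 2) * (∑ i, h p k i * V i) ^ 2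
          else 2 * (∑ i, h p k i * V i) ^ 2 := fun p => by
      split_ifs <;> ring
    simp only [hcoeff, sum_ite, not_lt]
  refine ⟨hsplit, hsplit ▸ add_nonneg (sum_nonneg fun k _ => sum_nonneg fun p hp => ?_)
    (by positivity)⟩
  rw [mul_div_assoc]
  exact mul_nonneg (mul_nonneg zero_le_two (hε.trans (hpos p (mem_filter.1 hp).2))) (sq_nonneg _)

open Finset in
/-- The key null-vector reaction term in Lemma 4.1 is nonnegative: with the normal block
`S_{αβ}` of (4.6), `-2 Σ h_{αki} h_{βkj} S_{αβ} Vⁱ Vʲ ≥ 0` when `(1-λ_p²)/(1+λ_p²) ≥ ε ≥ 0`. -/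
theorem null_vector_term_nonneg (n r : ℕ) (l : Fin n → ℝ) (hl : ∀ i, 0 ≤ l i)
    (ε : ℝ) (hε : 0 ≤ ε)
    (hpos : ∀ p : Fin n, (p : ℕ) < r → ε ≤ (1 - l p ^ 2) / (1 + l p ^ 2))
    (Snn : Fin n → Fin n → ℝ)
    (hSnn : ∀ p q, Snn p q =
      if p = q then -(if (p : ℕ) < r then (1 - l p ^ 2) / (1 + l p ^ 2) else 1) else 0)
    (h : Fin n → Fin n → Fin n → ℝ) (V : Fin n → ℝ) :
    (-2 * ∑ k, ∑ p, ∑ q, ∑ i, ∑ j, h p k i * h q k j * Snn p q * V i * V j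
      = (∑ k, ∑ p ∈ univ.filter (fun p : Fin n => (p : ℕ) < r),
          2 * (1 - l p ^ 2) / (1 + l p ^ 2) * (∑ i, h p k i * V i) ^ 2)
        + ∑ k, ∑ p ∈ univ.filter (fun p : Fin n => r ≤ (p : ℕ)),
            2 * (∑ i, h p k i * V i) ^ 2) ∧
    0 ≤ -2 * ∑ k, ∑ p, ∑ q, ∑ i, ∑ j, h p k i * h q k j * Snn p q * V i * V j :=
  null_vector_term_nonneg_general n r l ε hε hpos Snn hSnn h V
end

section
/- Suppose 0 < λ₂ ≤ λ₁ with λ₁λ₂ < 1, and set S₁₁ = (1-λ₁²)/(1+λ₁²) < 0 < S₂₂ = (1-λ₂²)/(1+λ₂²). If reals a, b satisfy (λ₁/(1+λ₁²))a + (λ₂/(1+λ₂²))b = 0, then 4a²S₁₁ + 4b²S₂₂ ≥ 0. -/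
/-!
Write `S(l) = (1 - l²)/(1 + l²)` and `c(l) = 2l/(1 + l²)`, so that `c(l)² + S(l)² = 1`.
The gradient condition says `c(l₁) a = -c(l₂) b`, i.e. `a²(1 - S₁²) = b²(1 - S₂²)`.
Since `S₁ + S₂ = 2(1 - l₁²l₂²)/((1 + l₁²)(1 + l₂²)) ≥ 0` and `S₁ ≤ S₂`, we get `S₁² ≤ S₂²`,
hence `a² ≤ b²`, and then `a²S₁ + b²S₂ ≥ a²(S₁ + S₂) ≥ 0`.
-/

lemma sq_mul_add_sq_mul_nonneg {s₁ s₂ a b : ℝ} (hsum : 0 ≤ s₁ + s₂) (hle : s₁ ≤ s₂)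
    (hs₁ : s₁ ^ 2 < 1) (h : a ^ 2 * (1 - s₁ ^ 2) = b ^ 2 * (1 - s₂ ^ 2)) :
    0 ≤ a ^ 2 * s₁ + b ^ 2 * s₂ := by
  have hs₂ : 0 ≤ s₂ := by linarith
  have hsq : s₁ ^ 2 ≤ s₂ ^ 2 := by nlinarith
  have hab : a ^ 2 ≤ b ^ 2 := by
    refine le_of_mul_le_mul_right ?_ (sub_pos.mpr hs₁)
    calc a ^ 2 * (1 - s₁ ^ 2) = b ^ 2 * (1 - s₂ ^ 2) := h
      _ ≤ b ^ 2 * (1 - s₁ ^ 2) := by gcongr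
  calc 0 ≤ a ^ 2 * (s₁ + s₂) := by positivity
    _ ≤ a ^ 2 * s₁ + b ^ 2 * s₂ := by nlinarith

lemma one_sub_sq_one_sub_sq_div_one_add_sq (l : ℝ) :
    1 - ((1 - l ^ 2) / (1 + l ^ 2)) ^ 2 = (2 * l / (1 + l ^ 2)) ^ 2 := by
  field_simp
  ring

lemma one_sub_sq_div_one_add_sq_le_of_sq_le {l₁ l₂ : ℝ} (h : l₂ ^ 2 ≤ l₁ ^ 2) :
    (1 - l₁ ^ 2) / (1 + l₁ ^ 2) ≤ (1 - l₂ ^ 2) / (1 + l₂ ^ 2) := by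
  rw [div_le_div_iff₀ (by positivity) (by positivity)]
  nlinarith

lemma one_sub_sq_div_one_add_sq_add (l₁ l₂ : ℝ) :
    (1 - l₁ ^ 2) / (1 + l₁ ^ 2) + (1 - l₂ ^ 2) / (1 + l₂ ^ 2)
      = 2 * (1 - (l₁ * l₂) ^ 2) / ((1 + l₁ ^ 2) * (1 + l₂ ^ 2)) := by
  field_simp
  ring

theorem combined_positivity_general (l₁ l₂ : ℝ) (h₂ : 0 < l₂) (h₁₂ : l₂ ≤ l₁)
    (harea : l₁ * l₂ < 1)
    (a b : ℝ) (hab : l₁ / (1 + l₁ ^ 2) * a + l₂ / (1 + l₂ ^ 2) * b = 0) :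
    0 ≤ 4 * a ^ 2 * ((1 - l₁ ^ 2) / (1 + l₁ ^ 2))
        + 4 * b ^ 2 * ((1 - l₂ ^ 2) / (1 + l₂ ^ 2)) := by
  have hl₁ : 0 < l₁ := h₂.trans_le h₁₂
  have hsum : 0 ≤ (1 - l₁ ^ 2) / (1 + l₁ ^ 2) + (1 - l₂ ^ 2) / (1 + l₂ ^ 2) := by
    rw [one_sub_sq_div_one_add_sq_add]
    have : (l₁ * l₂) ^ 2 ≤ 1 := pow_le_one₀ (mul_pos hl₁ h₂).le harea.le
    have : 0 ≤ 1 - (l₁ * l₂) ^ 2 := by linarith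
    positivity
  have hle := one_sub_sq_div_one_add_sq_le_of_sq_le (pow_le_pow_left₀ h₂.le h₁₂ 2)
  have hs₁ : ((1 - l₁ ^ 2) / (1 + l₁ ^ 2)) ^ 2 < 1 := by
    have : 0 < (2 * l₁ / (1 + l₁ ^ 2)) ^ 2 := by positivity
    linarith [one_sub_sq_one_sub_sq_div_one_add_sq l₁]
  have hcross : a ^ 2 * (1 - ((1 - l₁ ^ 2) / (1 + l₁ ^ 2)) ^ 2)
      = b ^ 2 * (1 - ((1 - l₂ ^ 2) / (1 + l₂ ^ 2)) ^ 2) := by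
    have hx : l₁ / (1 + l₁ ^ 2) * a = -(l₂ / (1 + l₂ ^ 2) * b) := by linarith
    rw [one_sub_sq_one_sub_sq_div_one_add_sq, one_sub_sq_one_sub_sq_div_one_add_sq]
    linear_combination 4 * (l₁ / (1 + l₁ ^ 2) * a - l₂ / (1 + l₂ ^ 2) * b) * hx
  linarith [sq_mul_add_sq_mul_nonneg hsum hle hs₁ hcross]

/-- Combination of (5.9), (5.14), (5.15): the gradient condition and `S₁₁ + S₂₂ > 0`
with `S₁₁ < 0 < S₂₂` give `4a²S₁₁ + 4b²S₂₂ ≥ 0`. -/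
theorem combined_positivity (l₁ l₂ : ℝ) (h₂ : 0 < l₂) (h₁₂ : l₂ ≤ l₁)
    (harea : l₁ * l₂ < 1)
    (hS1 : (1 - l₁ ^ 2) / (1 + l₁ ^ 2) < 0) (hS2 : 0 < (1 - l₂ ^ 2) / (1 + l₂ ^ 2))
    (a b : ℝ) (hab : l₁ / (1 + l₁ ^ 2) * a + l₂ / (1 + l₂ ^ 2) * b = 0) :
    0 ≤ 4 * a ^ 2 * ((1 - l₁ ^ 2) / (1 + l₁ ^ 2))
        + 4 * b ^ 2 * ((1 - l₂ ^ 2) / (1 + l₂ ^ 2)) :=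
  combined_positivity_general l₁ l₂ h₂ h₁₂ harea a b hab
end
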